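/- Let a(x) = 1 and b(x) = −γ(1+x)^l on [0,∞), with γ > 0 and l ∈ ℝ. (i) If l < 0, then λ₀(b,a) = 0. (ii) If l ≥ 0, then there exist constants c_l, C_l > 0, depending only on l, such that c_l·γ² ≤ λ₀(b,a) ≤ C_l·γ² for all γ > 1, and c_l·γ^{2/(l+1)} ≤ λ₀(b,a) ≤ C_l·γ^{2/(l+1)} for all 0 < γ ≤ 1. -/

import Mathlib

open MeasureTheory Set Filter
open scoped ENNReal

/-- `B(x) = ∫₀ˣ (b/a)(y) dy`. -/
noncomputable def Bfun (a b : ℝ → ℝ) (x : ℝ) : ℝ := ∫ y in (0:ℝ)..x, b y / a y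

/-- Variational bottom of the spectrum of `H_D` on `(0,∞)` with Dirichlet condition at `0`. -/
noncomputable def lam0 (a b : ℝ → ℝ) : ℝ≥0∞ :=
  ⨅ f ∈ {f : ℝ → ℝ |
      ContDiff ℝ 1 f ∧ HasCompactSupport f ∧ tsupport f ⊆ Ioi (0:ℝ) ∧ f ≠ 0},
    ENNReal.ofReal
      ((2⁻¹ * ∫ x in Ioi (0:ℝ), a x * (deriv f x) ^ 2 * Real.exp (2 * Bfun a b x)) /
        ∫ x in Ioi (0:ℝ), (f x) ^ 2 * Real.exp (2 * Bfun a b x))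

/-!
Write `W = exp (2B)`, so that `W' = 2 b W`. Integrating `(f² W)' = 2 f f' W + 2 b f² W` gives
`∫ f f' W = -∫ b f² W`. If `b ≤ 0`, and `b ≤ -v` beyond `R`, then on `(R, ∞)` this identity and
`2 f f' ≤ v f² + f'² / v` bound `∫ f² W` by `(∫ f² W + v⁻² ∫ f'² W) / 2`, while on `(0, R]` the
Hardy bound `f(x)² W(x) ≤ x ∫ f'² W` contributes at most `R² / 2 · ∫ f'² W`. Hence
`λ₀ ≥ 1 / (2 (R² + v⁻²))`: take `R = 0, v = γ`, or, when `γ ≤ 1`, `R = 1 / v = γ^(-1/(l+1))`.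

Conversely, a bump on `[R, 2R]`, across which `W` drops by at most `exp (2 R γ (1 + 2R)^l)`, shows
`λ₀ ≲ R⁻²` for the same two choices of `R`. For `l < 0` the drift decays, so bumps of any width `L`
placed far enough out show `λ₀ ≲ L⁻²`, whence `λ₀ = 0`.
-/

structure IsTestFun (f : ℝ → ℝ) : Prop where
  contDiff : ContDiff ℝ 1 f
  hasCompactSupport : HasCompactSupport f
  tsupport_subset : tsupport f ⊆ Ioi 0

noncomputable def weight (b : ℝ → ℝ) (x : ℝ) : ℝ :=
  Real.exp (2 * ∫ y in (0:ℝ)..x, b y)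

noncomputable def energy (b f : ℝ → ℝ) : ℝ := ∫ x in Ioi 0, deriv f x ^ 2 * weight b x

noncomputable def mass (b f : ℝ → ℝ) : ℝ := ∫ x in Ioi 0, f x ^ 2 * weight b x

lemma lam0_one_eq (b : ℝ → ℝ) :
    lam0 (fun _ => 1) b =
      ⨅ (f : ℝ → ℝ) (_ : IsTestFun f ∧ f ≠ 0),
        ENNReal.ofReal (2⁻¹ * energy b f / mass b f) := by
  simp only [lam0, Bfun, div_one, one_mul]
  refine iInf_congr fun f => iInf_congr_Prop ?_ fun _ => rfl
  exact ⟨fun ⟨h1, h2, h3, h4⟩ => ⟨⟨h1, h2, h3⟩, h4⟩,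
    fun ⟨⟨h1, h2, h3⟩, h4⟩ => ⟨h1, h2, h3, h4⟩⟩

lemma support_sq_subset_tsupport (f : ℝ → ℝ) :
    Function.support (fun x => f x ^ 2) ⊆ tsupport f :=
  (Function.support_pow f two_ne_zero).trans_subset (subset_tsupport f)

lemma support_deriv_sq_subset_tsupport (f : ℝ → ℝ) :
    Function.support (fun x => deriv f x ^ 2) ⊆ tsupport f :=
  (Function.support_pow (deriv f) two_ne_zero).trans_subset support_deriv_subset

lemma support_mul_deriv_subset_tsupport (f : ℝ → ℝ) :
    Function.support (fun x => f x * deriv f x) ⊆ tsupport f :=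
  (Function.support_mul_subset_left f (deriv f)).trans (subset_tsupport f)

namespace IsTestFun

variable {f : ℝ → ℝ}

lemma continuous (hf : IsTestFun f) : Continuous f := hf.contDiff.continuous

lemma continuous_deriv (hf : IsTestFun f) : Continuous (deriv f) :=
  hf.contDiff.continuous_deriv le_rfl

lemma eventuallyEq_zero_of_nonpos (hf : IsTestFun f) {x : ℝ} (hx : x ≤ 0) : f =ᶠ[nhds x] 0 :=
  notMem_tsupport_iff_eventuallyEq.1 fun h => (not_lt.2 hx) (hf.tsupport_subset h)

lemma integrable_mul (hf : IsTestFun f) {u g : ℝ → ℝ} (hu : Continuous u)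
    (hsupp : Function.support u ⊆ tsupport f) (hg : ContinuousOn g (Ioi 0)) :
    Integrable fun x => u x * g x :=
  (integrableOn_iff_integrable_of_support_subset
      ((Function.support_mul_subset_left u g).trans hsupp)).1
    ((hu.continuousOn.mul (hg.mono hf.tsupport_subset)).integrableOn_compact
      hf.hasCompactSupport.isCompact)

lemma setIntegral_Ioi_eq (hf : IsTestFun f) {u g : ℝ → ℝ}
    (hsupp : Function.support u ⊆ tsupport f) :
    ∫ x in Ioi 0, u x * g x = ∫ x, u x * g x :=
  setIntegral_eq_integral_of_forall_compl_eq_zero fun _ hx =>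
    Function.notMem_support.1 fun h =>
      hx (hf.tsupport_subset (hsupp (Function.support_mul_subset_left u g h)))

end IsTestFun

section Weight

variable {b : ℝ → ℝ}

lemma weight_pos (b : ℝ → ℝ) (x : ℝ) : 0 < weight b x := Real.exp_pos _

lemma intervalIntegrable_of_continuousOn_Ici (hb : ContinuousOn b (Ici 0)) {x z : ℝ}
    (hx : 0 ≤ x) (hz : 0 ≤ z) : IntervalIntegrable b volume x z :=
  (hb.mono fun _ hy => le_min hx hz |>.trans hy.1).intervalIntegrable

lemma hasDerivAt_weight (hb : ContinuousOn b (Ici 0)) {x : ℝ} (hx : 0 < x) :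
    HasDerivAt (weight b) (2 * b x * weight b x) x := by
  have hB : HasDerivAt (fun z => ∫ y in (0:ℝ)..z, b y) (b x) x :=
    intervalIntegral.integral_hasDerivAt_right
      (intervalIntegrable_of_continuousOn_Ici hb le_rfl hx.le)
      ((hb.mono Ioi_subset_Ici_self).stronglyMeasurableAtFilter isOpen_Ioi x hx)
      (hb.continuousAt (Ici_mem_nhds hx))
  exact (hB.const_mul 2).exp.congr_deriv (by rw [weight]; ring)

lemma continuousOn_weight (hb : ContinuousOn b (Ici 0)) : ContinuousOn (weight b) (Ioi 0) :=
  fun _ hx => (hasDerivAt_weight hb hx).continuousAt.continuousWithinAt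

lemma weight_eq_mul_exp (hb : ContinuousOn b (Ici 0)) {x z : ℝ} (hx : 0 ≤ x) (hz : 0 ≤ z) :
    weight b z = weight b x * Real.exp (2 * ∫ y in x..z, b y) := by
  rw [weight, weight, ← Real.exp_add, ← mul_add,
    intervalIntegral.integral_add_adjacent_intervals
    (intervalIntegrable_of_continuousOn_Ici hb le_rfl hx)
    (intervalIntegrable_of_continuousOn_Ici hb hx hz)]

lemma weight_le_weight (hb : ContinuousOn b (Ici 0)) {x z : ℝ} (hx : 0 ≤ x) (hxz : x ≤ z)
    (hb0 : ∀ y ∈ Icc x z, b y ≤ 0) : weight b z ≤ weight b x := by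
  rw [weight_eq_mul_exp hb hx (hx.trans hxz)]
  refine mul_le_of_le_one_right (weight_pos b x).le (Real.exp_le_one_iff.2 ?_)
  have := intervalIntegral.integral_mono_on hxz
    (intervalIntegrable_of_continuousOn_Ici hb hx (hx.trans hxz)) intervalIntegrable_const hb0
  simp only [intervalIntegral.integral_zero] at this
  linarith

lemma weight_mul_exp_le_weight (hb : ContinuousOn b (Ici 0)) {x z M : ℝ} (hx : 0 ≤ x)
    (hxz : x ≤ z) (hbM : ∀ y ∈ Icc x z, -M ≤ b y) :
    weight b x * Real.exp (-(2 * ((z - x) * M))) ≤ weight b z := by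
  rw [weight_eq_mul_exp hb hx (hx.trans hxz)]
  refine mul_le_mul_of_nonneg_left (Real.exp_le_exp.2 ?_) (weight_pos b x).le
  have := intervalIntegral.integral_mono_on hxz intervalIntegrable_const
    (intervalIntegrable_of_continuousOn_Ici hb hx (hx.trans hxz)) hbM
  simp only [intervalIntegral.integral_const, smul_eq_mul] at this
  linarith

end Weight

section QuadraticForms

variable {b f : ℝ → ℝ}

lemma integrable_sq_mul_weight (hb : ContinuousOn b (Ici 0)) (hf : IsTestFun f) :
    Integrable fun x => f x ^ 2 * weight b x :=
  hf.integrable_mul (hf.continuous.pow 2) (support_sq_subset_tsupport f)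
    (continuousOn_weight hb)

lemma integrable_deriv_sq_mul_weight (hb : ContinuousOn b (Ici 0)) (hf : IsTestFun f) :
    Integrable fun x => deriv f x ^ 2 * weight b x :=
  hf.integrable_mul (hf.continuous_deriv.pow 2) (support_deriv_sq_subset_tsupport f)
    (continuousOn_weight hb)

lemma integrable_mul_deriv_mul_weight (hb : ContinuousOn b (Ici 0)) (hf : IsTestFun f) :
    Integrable fun x => f x * deriv f x * weight b x :=
  hf.integrable_mul (hf.continuous.mul hf.continuous_deriv)
    (support_mul_deriv_subset_tsupport f) (continuousOn_weight hb)

lemma integrable_sq_mul_drift_mul_weight (hb : ContinuousOn b (Ici 0)) (hf : IsTestFun f) :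
    Integrable fun x => f x ^ 2 * (b x * weight b x) :=
  hf.integrable_mul (hf.continuous.pow 2) (support_sq_subset_tsupport f)
    ((hb.mono Ioi_subset_Ici_self).mul (continuousOn_weight hb))

lemma hasDerivAt_sq_mul_weight (hb : ContinuousOn b (Ici 0)) (hf : IsTestFun f) (x : ℝ) :
    HasDerivAt (fun x => f x ^ 2 * weight b x)
      (2 * (f x * deriv f x * weight b x) + 2 * (f x ^ 2 * (b x * weight b x))) x := by
  rcases lt_or_ge 0 x with hx | hx
  · exact (((hf.contDiff.differentiable one_ne_zero x).hasDerivAt.fun_pow 2).fun_mul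
      (hasDerivAt_weight hb hx)).congr_deriv (by push_cast; ring)
  · have hf0 := hf.eventuallyEq_zero_of_nonpos hx
    have hzero : (fun x => f x ^ 2 * weight b x) =ᶠ[nhds x] fun _ => 0 :=
      hf0.mono fun y hy => by simp [hy]
    simpa [hf0.eq_of_nhds] using (hasDerivAt_const x (0:ℝ)).congr_of_eventuallyEq hzero

lemma integral_mul_deriv_mul_weight (hb : ContinuousOn b (Ici 0)) (hf : IsTestFun f) :
    ∫ x in Ioi 0, f x * deriv f x * weight b x =
      -∫ x in Ioi 0, f x ^ 2 * (b x * weight b x) := by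
  have hA := (integrable_mul_deriv_mul_weight hb hf).const_mul 2
  have hB := (integrable_sq_mul_drift_mul_weight hb hf).const_mul 2
  have h := integral_eq_zero_of_hasDerivAt_of_integrable (hasDerivAt_sq_mul_weight hb hf)
    (hA.add hB) (integrable_sq_mul_weight hb hf)
  rw [integral_add hA hB, integral_const_mul, integral_const_mul] at h
  rw [hf.setIntegral_Ioi_eq (support_mul_deriv_subset_tsupport f),
    hf.setIntegral_Ioi_eq (support_sq_subset_tsupport f)]
  linarith

lemma integral_mul_deriv_mul_weight_le (hb : ContinuousOn b (Ici 0)) (hf : IsTestFun f)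
    {ε : ℝ} (hε : 0 < ε) :
    ∫ x in Ioi 0, f x * deriv f x * weight b x ≤
      (ε * mass b f + ε⁻¹ * energy b f) / 2 := by
  have hD := (integrable_sq_mul_weight hb hf).const_mul ε
  have hN := (integrable_deriv_sq_mul_weight hb hf).const_mul ε⁻¹
  calc ∫ x in Ioi 0, f x * deriv f x * weight b x
      ≤ ∫ x in Ioi 0,
          (ε * (f x ^ 2 * weight b x) + ε⁻¹ * (deriv f x ^ 2 * weight b x)) / 2 := by
        refine setIntegral_mono_on (integrable_mul_deriv_mul_weight hb hf).integrableOn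
          ((hD.add hN).div_const 2).integrableOn measurableSet_Ioi fun x _ => ?_
        have hamgm : 2 * (f x * deriv f x) ≤ ε * f x ^ 2 + ε⁻¹ * deriv f x ^ 2 := by
          have := mul_nonneg (inv_nonneg.2 hε.le) (sq_nonneg (ε * f x - deriv f x))
          field_simp at this ⊢
          nlinarith
        nlinarith [mul_le_mul_of_nonneg_right hamgm (weight_pos b x).le]
    _ = (ε * mass b f + ε⁻¹ * energy b f) / 2 := by
        rw [integral_div, integral_add hD.integrableOn hN.integrableOn, integral_const_mul,
          integral_const_mul, mass, energy]

lemma mass_pos (hb : ContinuousOn b (Ici 0)) (hf : IsTestFun f) (hne : f ≠ 0) :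
    0 < mass b f := by
  have hsupp : Function.support f ⊆ Function.support (fun x => f x ^ 2 * weight b x) ∩ Ioi 0 :=
    fun x hx => ⟨mul_ne_zero (pow_ne_zero 2 hx) (weight_pos b x).ne',
      hf.tsupport_subset (subset_tsupport f hx)⟩
  rw [mass, setIntegral_pos_iff_support_of_nonneg_ae
    (ae_of_all _ fun x => mul_nonneg (sq_nonneg (f x)) (weight_pos b x).le)
    (integrable_sq_mul_weight hb hf).integrableOn]
  exact (hf.continuous.isOpen_support.measure_pos volume
    (Function.support_nonempty_iff.2 hne)).trans_le (measure_mono hsupp)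

end QuadraticForms

section LowerBound

variable {b f : ℝ → ℝ}

lemma sq_intervalIntegral_le {g : ℝ → ℝ} (hg : Continuous g) {x : ℝ} (hx : 0 < x) :
    (∫ y in (0:ℝ)..x, g y) ^ 2 ≤ x * ∫ y in (0:ℝ)..x, g y ^ 2 := by
  have hvol : volume.real (Ioc (0:ℝ) x) = x := by simp [hx.le]
  have hjensen := (even_two.convexOn_pow).map_set_average_le (continuousOn_pow 2) isClosed_univ
    (μ := volume) (t := Ioc 0 x) (by simp [hx]) (by simp) (ae_of_all _ fun y => mem_univ (g y))
    hg.integrableOn_Ioc (hg.pow 2).integrableOn_Ioc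
  simp only [setAverage_eq, hvol, smul_eq_mul] at hjensen
  rw [intervalIntegral.integral_of_le hx.le, intervalIntegral.integral_of_le hx.le]
  field_simp at hjensen
  exact hjensen

lemma sq_mul_weight_le_mul_energy (hb : ContinuousOn b (Ici 0)) (hb0 : ∀ x, 0 ≤ x → b x ≤ 0)
    (hf : IsTestFun f) {x : ℝ} (hx : 0 < x) : f x ^ 2 * weight b x ≤ x * energy b f := by
  have hf0 : f 0 = 0 := (hf.eventuallyEq_zero_of_nonpos le_rfl).eq_of_nhds
  have hftc : ∫ y in (0:ℝ)..x, deriv f y = f x := by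
    rw [intervalIntegral.integral_deriv_eq_sub
      (fun y _ => hf.contDiff.differentiable one_ne_zero y)
      (hf.continuous_deriv.intervalIntegrable 0 x), hf0, sub_zero]
  have hint := integrable_deriv_sq_mul_weight hb hf
  calc f x ^ 2 * weight b x
      ≤ x * (∫ y in (0:ℝ)..x, deriv f y ^ 2) * weight b x := by
        rw [← hftc]
        exact mul_le_mul_of_nonneg_right (sq_intervalIntegral_le hf.continuous_deriv hx)
          (weight_pos b x).le
    _ = x * ∫ y in (0:ℝ)..x, deriv f y ^ 2 * weight b x := by
        rw [intervalIntegral.integral_mul_const, mul_assoc]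
    _ ≤ x * ∫ y in (0:ℝ)..x, deriv f y ^ 2 * weight b y := by
        refine mul_le_mul_of_nonneg_left (intervalIntegral.integral_mono_on hx.le
          ((hf.continuous_deriv.pow 2).intervalIntegrable 0 x |>.mul_const _)
          hint.intervalIntegrable fun y hy => ?_) hx.le
        exact mul_le_mul_of_nonneg_left (weight_le_weight hb hy.1 hy.2
          fun z hz => hb0 z (hy.1.trans hz.1)) (sq_nonneg _)
    _ ≤ x * energy b f := by
        refine mul_le_mul_of_nonneg_left ?_ hx.le
        rw [intervalIntegral.integral_of_le hx.le]
        exact setIntegral_mono_set hint.integrableOn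
          (ae_of_all _ fun y => mul_nonneg (sq_nonneg _) (weight_pos b y).le)
          Ioc_subset_Ioi_self.eventuallyLE

lemma setIntegral_Ioc_sq_mul_weight_le (hb : ContinuousOn b (Ici 0))
    (hb0 : ∀ x, 0 ≤ x → b x ≤ 0) (hf : IsTestFun f) {R : ℝ} (hR : 0 ≤ R) :
    ∫ x in Ioc 0 R, f x ^ 2 * weight b x ≤ R ^ 2 / 2 * energy b f := by
  calc ∫ x in Ioc 0 R, f x ^ 2 * weight b x
      ≤ ∫ x in Ioc 0 R, x * energy b f :=
        setIntegral_mono_on (integrable_sq_mul_weight hb hf).integrableOn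
          (continuous_id.mul continuous_const).integrableOn_Ioc measurableSet_Ioc
          fun x hx => sq_mul_weight_le_mul_energy hb hb0 hf hx.1
    _ = R ^ 2 / 2 * energy b f := by
        rw [integral_mul_const, ← intervalIntegral.integral_of_le hR, integral_id]
        ring

lemma setIntegral_Ioi_sq_mul_weight_le (hb : ContinuousOn b (Ici 0))
    (hb0 : ∀ x, 0 ≤ x → b x ≤ 0) (hf : IsTestFun f) {R v : ℝ} (hR : 0 ≤ R) (hv : 0 < v)
    (hbv : ∀ x, R < x → b x ≤ -v) :
    ∫ x in Ioi R, f x ^ 2 * weight b x ≤ (mass b f + (v ^ 2)⁻¹ * energy b f) / 2 := by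
  have hint : Integrable fun x => -(f x ^ 2 * (b x * weight b x)) :=
    (integrable_sq_mul_drift_mul_weight hb hf).neg
  calc ∫ x in Ioi R, f x ^ 2 * weight b x
      ≤ ∫ x in Ioi R, v⁻¹ * -(f x ^ 2 * (b x * weight b x)) := by
        refine setIntegral_mono_on (integrable_sq_mul_weight hb hf).integrableOn
          (hint.const_mul _).integrableOn measurableSet_Ioi fun x hx => ?_
        rw [le_inv_mul_iff₀ hv]
        nlinarith [hbv x hx, mul_nonneg (sq_nonneg (f x)) (weight_pos b x).le]
    _ ≤ v⁻¹ * ∫ x in Ioi 0, -(f x ^ 2 * (b x * weight b x)) := by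
        rw [integral_const_mul]
        refine mul_le_mul_of_nonneg_left (setIntegral_mono_set hint.integrableOn
          ((ae_restrict_iff' measurableSet_Ioi).2 (ae_of_all _ fun x hx => ?_))
          (Ioi_subset_Ioi hR).eventuallyLE) (inv_nonneg.2 hv.le)
        show 0 ≤ -(f x ^ 2 * (b x * weight b x))
        have := mul_nonneg (sq_nonneg (f x)) (weight_pos b x).le
        nlinarith [hb0 x (le_of_lt hx)]
    _ = v⁻¹ * ∫ x in Ioi 0, f x * deriv f x * weight b x := by
        rw [integral_neg, integral_mul_deriv_mul_weight hb hf]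
    _ ≤ v⁻¹ * ((v * mass b f + v⁻¹ * energy b f) / 2) :=
        mul_le_mul_of_nonneg_left (integral_mul_deriv_mul_weight_le hb hf hv) (inv_nonneg.2 hv.le)
    _ = (mass b f + (v ^ 2)⁻¹ * energy b f) / 2 := by
        field_simp

lemma mass_le_mul_energy (hb : ContinuousOn b (Ici 0)) (hb0 : ∀ x, 0 ≤ x → b x ≤ 0)
    (hf : IsTestFun f) {R v : ℝ} (hR : 0 ≤ R) (hv : 0 < v) (hbv : ∀ x, R < x → b x ≤ -v) :
    mass b f ≤ (R ^ 2 + (v ^ 2)⁻¹) * energy b f := by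
  have hint := (integrable_sq_mul_weight hb hf).integrableOn (s := Ioi 0)
  have hsplit : mass b f = (∫ x in Ioc 0 R, f x ^ 2 * weight b x) +
      ∫ x in Ioi R, f x ^ 2 * weight b x := by
    rw [mass, ← Ioc_union_Ioi_eq_Ioi hR, setIntegral_union (Ioc_disjoint_Ioi le_rfl)
      measurableSet_Ioi (hint.mono_set Ioc_subset_Ioi_self) (hint.mono_set (Ioi_subset_Ioi hR))]
  have hnear := setIntegral_Ioc_sq_mul_weight_le hb hb0 hf hR
  have hfar := setIntegral_Ioi_sq_mul_weight_le hb hb0 hf hR hv hbv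
  linarith

lemma le_lam0_one (hb : ContinuousOn b (Ici 0)) (hb0 : ∀ x, 0 ≤ x → b x ≤ 0) {R v : ℝ}
    (hR : 0 ≤ R) (hv : 0 < v) (hbv : ∀ x, R < x → b x ≤ -v) :
    ENNReal.ofReal (2 * (R ^ 2 + (v ^ 2)⁻¹))⁻¹ ≤ lam0 (fun _ => 1) b := by
  rw [lam0_one_eq]
  refine le_iInf₂ fun f ⟨hf, hne⟩ => ENNReal.ofReal_le_ofReal ?_
  rw [le_div_iff₀ (mass_pos hb hf hne)]
  calc (2 * (R ^ 2 + (v ^ 2)⁻¹))⁻¹ * mass b f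
      ≤ (2 * (R ^ 2 + (v ^ 2)⁻¹))⁻¹ * ((R ^ 2 + (v ^ 2)⁻¹) * energy b f) :=
        mul_le_mul_of_nonneg_left (mass_le_mul_energy hb hb0 hf hR hv hbv) (by positivity)
    _ = 2⁻¹ * energy b f := by
        field_simp

end LowerBound

section Bump

noncomputable def unitBump : ContDiffBump (1/2 : ℝ) := ⟨1/4, 1/2, by norm_num, by norm_num⟩

lemma tsupport_unitBump : tsupport unitBump = Icc 0 1 := by
  rw [ContDiffBump.tsupport_eq, Real.closedBall_eq_Icc]
  norm_num [unitBump]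

lemma unitBump_half : unitBump (1/2) = 1 :=
  unitBump.one_of_mem_closedBall (Metric.mem_closedBall_self (by norm_num [unitBump]))

noncomputable def unitBumpRayleigh : ℝ :=
  2⁻¹ * (∫ x, deriv unitBump x ^ 2) / ∫ x, unitBump x ^ 2

lemma integral_unitBump_sq_pos : 0 < ∫ x, unitBump x ^ 2 :=
  (unitBump.continuous.pow 2).integral_pos_of_hasCompactSupport_nonneg_nonzero
    (unitBump.hasCompactSupport.mono' (support_sq_subset_tsupport _)) (fun _ => sq_nonneg _)
    (x := 1/2) (by rw [unitBump_half]; norm_num)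

lemma integral_deriv_unitBump_sq_pos : 0 < ∫ x, deriv unitBump x ^ 2 := by
  have hdiff : Differentiable ℝ unitBump :=
    unitBump.contDiff.differentiable (n := 1) one_ne_zero
  obtain ⟨x, hx⟩ : ∃ x, deriv unitBump x ≠ 0 := by
    by_contra! h
    have hconst := is_const_of_deriv_eq_zero hdiff h (1/2) 1
    rw [unitBump_half, unitBump.zero_of_le_dist (by norm_num [unitBump, Real.dist_eq])] at hconst
    norm_num at hconst
  exact ((unitBump.contDiff.continuous_deriv (n := 1) le_rfl).pow 2
    ).integral_pos_of_hasCompactSupport_nonneg_nonzero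
    (unitBump.hasCompactSupport.mono' (support_deriv_sq_subset_tsupport _)) (fun _ => sq_nonneg _)
    (pow_ne_zero 2 hx)

lemma unitBumpRayleigh_pos : 0 < unitBumpRayleigh := by
  have := integral_deriv_unitBump_sq_pos
  have := integral_unitBump_sq_pos
  unfold unitBumpRayleigh
  positivity

noncomputable def scaledBump (s L x : ℝ) : ℝ := unitBump ((x - s) / L)

variable {s L : ℝ}

lemma hasDerivAt_scaledBump (x : ℝ) :
    HasDerivAt (scaledBump s L) (deriv unitBump ((x - s) / L) / L) x := by
  have hin : HasDerivAt (fun x => (x - s) / L) (1 / L) x :=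
    ((hasDerivAt_id x).sub_const s).div_const L
  exact (((unitBump.contDiff.differentiable (n := 1) one_ne_zero _).hasDerivAt).comp x
    hin).congr_deriv (by ring)

lemma tsupport_scaledBump_subset (hL : 0 < L) : tsupport (scaledBump s L) ⊆ Icc s (s + L) := by
  refine closure_minimal (fun x hx => ?_) isClosed_Icc
  have hmem : (x - s) / L ∈ Icc (0:ℝ) 1 := tsupport_unitBump ▸ subset_tsupport _ hx
  rw [mem_Icc, div_nonneg_iff, div_le_one hL] at hmem
  constructor <;> rcases hmem with ⟨h | h, _⟩ <;> linarith [h.1, h.2]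

lemma isTestFun_scaledBump (hs : 0 < s) (hL : 0 < L) : IsTestFun (scaledBump s L) where
  contDiff := unitBump.contDiff.comp (by fun_prop)
  hasCompactSupport := isCompact_Icc.of_isClosed_subset (isClosed_tsupport _)
    (tsupport_scaledBump_subset hL)
  tsupport_subset := (tsupport_scaledBump_subset hL).trans fun _ hx => hs.trans_le hx.1

lemma scaledBump_ne_zero (hL : 0 < L) : scaledBump s L ≠ 0 := fun h => by
  have := congr_fun h (s + L / 2)
  rw [scaledBump, show (s + L / 2 - s) / L = 1 / 2 by field_simp; ring, unitBump_half] at this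
  norm_num at this

lemma integral_scaledBump_sq (hL : 0 < L) :
    ∫ x, scaledBump s L x ^ 2 = L * ∫ x, unitBump x ^ 2 := by
  simp only [scaledBump]
  rw [integral_sub_right_eq_self (fun y => unitBump (y / L) ^ 2) s,
    Measure.integral_comp_div (fun y => unitBump y ^ 2) L, abs_of_pos hL, smul_eq_mul]

lemma integral_deriv_scaledBump_sq (hL : 0 < L) :
    ∫ x, deriv (scaledBump s L) x ^ 2 = (∫ x, deriv unitBump x ^ 2) / L := by
  simp only [fun x => (hasDerivAt_scaledBump (s := s) (L := L) x).deriv, div_pow]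
  rw [integral_div, integral_sub_right_eq_self (fun y => deriv unitBump (y / L) ^ 2) s,
    Measure.integral_comp_div (fun y => deriv unitBump y ^ 2) L, abs_of_pos hL, smul_eq_mul]
  field_simp

end Bump

section UpperBound

variable {b : ℝ → ℝ} {s L M : ℝ}

lemma energy_scaledBump_le (hb : ContinuousOn b (Ici 0)) (hs : 0 < s) (hL : 0 < L)
    (hb0 : ∀ x ∈ Icc s (s + L), b x ≤ 0) :
    energy b (scaledBump s L) ≤ weight b s * ((∫ x, deriv unitBump x ^ 2) / L) := by
  have hf := isTestFun_scaledBump hs hL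
  calc energy b (scaledBump s L)
      ≤ ∫ x in Ioi 0, deriv (scaledBump s L) x ^ 2 * weight b s := by
        refine setIntegral_mono_on (integrable_deriv_sq_mul_weight hb hf).integrableOn
          (hf.integrable_mul (hf.continuous_deriv.pow 2) (support_deriv_sq_subset_tsupport _)
            continuousOn_const).integrableOn measurableSet_Ioi fun x _ => ?_
        by_cases hx : x ∈ tsupport (scaledBump s L)
        · obtain ⟨hsx, hxL⟩ := tsupport_scaledBump_subset hL hx
          exact mul_le_mul_of_nonneg_left (weight_le_weight hb hs.le hsx
            fun y hy => hb0 y ⟨hy.1, hy.2.trans hxL⟩) (sq_nonneg _)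
        · simp [Function.notMem_support.1 fun h => hx (support_deriv_subset h)]
    _ = weight b s * ((∫ x, deriv unitBump x ^ 2) / L) := by
        rw [hf.setIntegral_Ioi_eq (support_deriv_sq_subset_tsupport _), integral_mul_const,
          integral_deriv_scaledBump_sq hL, mul_comm]

lemma mass_scaledBump_ge (hb : ContinuousOn b (Ici 0)) (hs : 0 < s) (hL : 0 < L)
    (hbM : ∀ x ∈ Icc s (s + L), -M ≤ b x ∧ b x ≤ 0) :
    weight b s * Real.exp (-(2 * (L * M))) * (L * ∫ x, unitBump x ^ 2) ≤
      mass b (scaledBump s L) := by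
  have hf := isTestFun_scaledBump hs hL
  have hM : 0 ≤ M := by linarith [hbM s ⟨le_rfl, by linarith⟩]
  calc weight b s * Real.exp (-(2 * (L * M))) * (L * ∫ x, unitBump x ^ 2)
      = ∫ x in Ioi 0, scaledBump s L x ^ 2 * (weight b s * Real.exp (-(2 * (L * M)))) := by
        rw [hf.setIntegral_Ioi_eq (support_sq_subset_tsupport _), integral_mul_const,
          integral_scaledBump_sq hL, mul_comm]
    _ ≤ mass b (scaledBump s L) := by
        refine setIntegral_mono_on (hf.integrable_mul (hf.continuous.pow 2)
          (support_sq_subset_tsupport _) continuousOn_const).integrableOn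
          (integrable_sq_mul_weight hb hf).integrableOn measurableSet_Ioi fun x _ => ?_
        by_cases hx : x ∈ tsupport (scaledBump s L)
        · obtain ⟨hsx, hxL⟩ := tsupport_scaledBump_subset hL hx
          refine mul_le_mul_of_nonneg_left (le_trans ?_ (weight_mul_exp_le_weight hb hs.le hsx
            fun y hy => (hbM y ⟨hy.1, hy.2.trans hxL⟩).1)) (sq_nonneg _)
          exact mul_le_mul_of_nonneg_left (Real.exp_le_exp.2 (by nlinarith))
            (weight_pos b s).le
        · simp [image_eq_zero_of_notMem_tsupport hx]

/-- Test `λ₀` with a bump on `[s, s + L]`, across which the weight drops by at most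
`exp (2 L M)`. -/
lemma lam0_one_le (hb : ContinuousOn b (Ici 0)) (hs : 0 < s) (hL : 0 < L)
    (hbM : ∀ x ∈ Icc s (s + L), -M ≤ b x ∧ b x ≤ 0) :
    lam0 (fun _ => 1) b ≤ ENNReal.ofReal (Real.exp (2 * (L * M)) * unitBumpRayleigh / L ^ 2) := by
  rw [lam0_one_eq]
  refine (iInf₂_le _ ⟨isTestFun_scaledBump hs hL, scaledBump_ne_zero hL⟩).trans
    (ENNReal.ofReal_le_ofReal ?_)
  have hN := energy_scaledBump_le hb hs hL fun x hx => (hbM x hx).2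
  have hD := mass_scaledBump_ge hb hs hL hbM
  have hK := integral_unitBump_sq_pos
  have hW := weight_pos b s
  calc 2⁻¹ * energy b (scaledBump s L) / mass b (scaledBump s L)
      ≤ 2⁻¹ * (weight b s * ((∫ x, deriv unitBump x ^ 2) / L)) /
          (weight b s * Real.exp (-(2 * (L * M))) * (L * ∫ x, unitBump x ^ 2)) :=
        div_le_div₀ (by positivity) (by linarith) (by positivity) hD
    _ = Real.exp (2 * (L * M)) * unitBumpRayleigh / L ^ 2 := by
        rw [unitBumpRayleigh, Real.exp_neg]
        field_simp

end UpperBound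

section PowerDrift

noncomputable def powDrift (γ l : ℝ) : ℝ → ℝ := fun x => -(γ * (1 + x) ^ l)

variable {γ l : ℝ}

lemma continuousOn_powDrift (γ l : ℝ) : ContinuousOn (powDrift γ l) (Ici 0) :=
  (continuousOn_const.mul ((continuousOn_const.add continuousOn_id).rpow_const
    fun x hx => Or.inl (by simp only [mem_Ici] at hx; linarith : (0:ℝ) < 1 + x).ne')).neg

lemma powDrift_nonpos (hγ : 0 ≤ γ) {x : ℝ} (hx : 0 ≤ x) : powDrift γ l x ≤ 0 := by
  have : 0 ≤ (1 + x) ^ l := Real.rpow_nonneg (by linarith) l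
  simp only [powDrift, neg_nonpos]
  positivity

lemma le_lam0_powDrift (hl : 0 ≤ l) (hγ : 0 < γ) :
    ENNReal.ofReal (2⁻¹ * γ ^ 2) ≤ lam0 (fun _ => 1) (powDrift γ l) := by
  have h := le_lam0_one (continuousOn_powDrift γ l) (fun x hx => powDrift_nonpos hγ.le hx)
    le_rfl hγ fun x hx => ?_
  · rwa [show (2 * ((0:ℝ) ^ 2 + (γ ^ 2)⁻¹))⁻¹ = 2⁻¹ * γ ^ 2 by
      rw [zero_pow two_ne_zero, zero_add, mul_inv, inv_inv]] at h
  · have : 1 ≤ (1 + x) ^ l := Real.one_le_rpow (by linarith) hl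
    simp only [powDrift, neg_le_neg_iff]
    nlinarith

lemma le_lam0_powDrift_rpow (hl : 0 ≤ l) {ρ : ℝ} (hρ : 0 < ρ) :
    ENNReal.ofReal (4⁻¹ * ρ ^ 2) ≤ lam0 (fun _ => 1) (powDrift (ρ ^ (l + 1)) l) := by
  have h := le_lam0_one (continuousOn_powDrift (ρ ^ (l + 1)) l)
    (fun x hx => powDrift_nonpos (by positivity) hx) (inv_nonneg.2 hρ.le) hρ fun x hx => ?_
  · rwa [show (2 * ((ρ⁻¹) ^ 2 + (ρ ^ 2)⁻¹))⁻¹ = 4⁻¹ * ρ ^ 2 by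
      field_simp; ring] at h
  · have hmono : (ρ⁻¹) ^ l ≤ (1 + x) ^ l :=
      Real.rpow_le_rpow (by positivity) (by linarith [inv_pos.2 hρ]) hl
    have hscale : ρ ^ (l + 1) * (ρ⁻¹) ^ l = ρ := by
      rw [Real.rpow_add_one hρ.ne', Real.inv_rpow hρ.le]
      field_simp
    simp only [powDrift, neg_le_neg_iff]
    calc ρ = ρ ^ (l + 1) * (ρ⁻¹) ^ l := hscale.symm
      _ ≤ ρ ^ (l + 1) * (1 + x) ^ l := mul_le_mul_of_nonneg_left hmono (by positivity)

lemma lam0_powDrift_le (hl : 0 ≤ l) (hγ : 0 < γ) {R : ℝ} (hR : 0 < R)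
    (hscale : R * (γ * (1 + 2 * R) ^ l) ≤ 3 ^ l) :
    lam0 (fun _ => 1) (powDrift γ l) ≤
      ENNReal.ofReal (Real.exp (2 * 3 ^ l) * unitBumpRayleigh / R ^ 2) := by
  refine (lam0_one_le (M := γ * (1 + 2 * R) ^ l) (continuousOn_powDrift γ l) hR hR
    fun x hx => ⟨?_, ?_⟩).trans (ENNReal.ofReal_le_ofReal ?_)
  · have : (1 + x) ^ l ≤ (1 + 2 * R) ^ l :=
      Real.rpow_le_rpow (by linarith [hx.1]) (by linarith [hx.2]) hl
    simp only [powDrift, neg_le_neg_iff]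
    exact mul_le_mul_of_nonneg_left this hγ.le
  · exact powDrift_nonpos hγ.le (hR.le.trans hx.1)
  · have := unitBumpRayleigh_pos
    gcongr

lemma lam0_powDrift_le_sq (hl : 0 ≤ l) (hγ : 1 < γ) :
    lam0 (fun _ => 1) (powDrift γ l) ≤
      ENNReal.ofReal (Real.exp (2 * 3 ^ l) * unitBumpRayleigh * γ ^ 2) := by
  have hγ0 : 0 < γ := one_pos.trans hγ
  have h := lam0_powDrift_le hl hγ0 (inv_pos.2 hγ0) ?_
  · rwa [inv_pow, div_inv_eq_mul] at h
  · rw [← mul_assoc, inv_mul_cancel₀ hγ0.ne', one_mul]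
    refine Real.rpow_le_rpow (by positivity) ?_ hl
    linarith [inv_lt_one_of_one_lt₀ hγ]

lemma lam0_powDrift_rpow_le (hl : 0 ≤ l) {ρ : ℝ} (hρ : 0 < ρ) (hρ1 : ρ ≤ 1) :
    lam0 (fun _ => 1) (powDrift (ρ ^ (l + 1)) l) ≤
      ENNReal.ofReal (Real.exp (2 * 3 ^ l) * unitBumpRayleigh * ρ ^ 2) := by
  have hR1 : 1 ≤ ρ⁻¹ := one_le_inv_iff₀.2 ⟨hρ, hρ1⟩
  have h := lam0_powDrift_le (γ := ρ ^ (l + 1)) hl (by positivity) (inv_pos.2 hρ) ?_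
  · rwa [inv_pow, div_inv_eq_mul] at h
  · calc ρ⁻¹ * (ρ ^ (l + 1) * (1 + 2 * ρ⁻¹) ^ l)
        ≤ ρ⁻¹ * (ρ ^ (l + 1) * (3 * ρ⁻¹) ^ l) := by
          gcongr
          linarith
      _ = 3 ^ l := by
          rw [Real.mul_rpow (by norm_num) (by positivity), Real.rpow_add_one hρ.ne',
            Real.inv_rpow hρ.le]
          field_simp

lemma lam0_powDrift_le_of_neg (hl : l < 0) (hγ : 0 < γ) {L : ℝ} (hL : 0 < L) :
    lam0 (fun _ => 1) (powDrift γ l) ≤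
      ENNReal.ofReal (Real.exp 2 * unitBumpRayleigh / L ^ 2) := by
  set s := ((γ * L)⁻¹) ^ l⁻¹
  have hs : 0 < s := by positivity
  have hsl : s ^ l = (γ * L)⁻¹ := Real.rpow_inv_rpow (by positivity) hl.ne
  have hdecay : (1 + s) ^ l ≤ (γ * L)⁻¹ :=
    hsl ▸ Real.rpow_le_rpow_of_nonpos hs (by linarith) hl.le
  refine (lam0_one_le (M := γ * (1 + s) ^ l) (continuousOn_powDrift γ l) hs hL
    fun x hx => ⟨?_, powDrift_nonpos hγ.le (hs.le.trans hx.1)⟩).trans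
    (ENNReal.ofReal_le_ofReal ?_)
  · simp only [powDrift, neg_le_neg_iff]
    exact mul_le_mul_of_nonneg_left
      (Real.rpow_le_rpow_of_nonpos (by linarith) (by linarith [hx.1]) hl.le) hγ.le
  · have hLM : L * (γ * (1 + s) ^ l) ≤ 1 :=
      calc L * (γ * (1 + s) ^ l) ≤ L * (γ * (γ * L)⁻¹) := by gcongr
        _ = 1 := by field_simp
    have := unitBumpRayleigh_pos
    gcongr
    linarith

lemma lam0_powDrift_eq_zero (hl : l < 0) (hγ : 0 < γ) :
    lam0 (fun _ => 1) (powDrift γ l) = 0 := by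
  have hlim : Tendsto (fun L : ℝ => ENNReal.ofReal (Real.exp 2 * unitBumpRayleigh / L ^ 2)) atTop
      (nhds 0) := by
    rw [← ENNReal.ofReal_zero]
    exact ENNReal.tendsto_ofReal
      (tendsto_const_nhds.div_atTop (tendsto_pow_atTop two_ne_zero))
  exact le_antisymm (ge_of_tendsto hlim ((eventually_gt_atTop 0).mono
    fun L hL => lam0_powDrift_le_of_neg hl hγ hL)) zero_le

lemma exists_rpow_eq_of_le_one (hl : 0 ≤ l) (hγ : 0 < γ) (hγ1 : γ ≤ 1) :
    ∃ ρ, 0 < ρ ∧ ρ ≤ 1 ∧ ρ ^ (l + 1) = γ ∧ γ ^ (2 / (l + 1)) = ρ ^ 2 := by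
  refine ⟨γ ^ (l + 1)⁻¹, by positivity, Real.rpow_le_one hγ.le hγ1 (by positivity),
    Real.rpow_inv_rpow hγ.le (by positivity), ?_⟩
  rw [div_eq_mul_inv, mul_comm, Real.rpow_mul hγ.le, Real.rpow_two]

end PowerDrift

theorem stmt7 (l : ℝ) :
    (l < 0 → ∀ γ : ℝ, 0 < γ →
      lam0 (fun _ => 1) (fun x => -(γ * (1 + x) ^ l)) = 0) ∧
    (0 ≤ l → ∃ c C : ℝ, 0 < c ∧ 0 < C ∧
      (∀ γ : ℝ, 1 < γ →
        ENNReal.ofReal (c * γ ^ 2) ≤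
            lam0 (fun _ => 1) (fun x => -(γ * (1 + x) ^ l)) ∧
          lam0 (fun _ => 1) (fun x => -(γ * (1 + x) ^ l)) ≤
            ENNReal.ofReal (C * γ ^ 2)) ∧
      (∀ γ : ℝ, 0 < γ → γ ≤ 1 →
        ENNReal.ofReal (c * γ ^ (2 / (l + 1))) ≤
            lam0 (fun _ => 1) (fun x => -(γ * (1 + x) ^ l)) ∧
          lam0 (fun _ => 1) (fun x => -(γ * (1 + x) ^ l)) ≤
            ENNReal.ofReal (C * γ ^ (2 / (l + 1))))) := by
  refine ⟨fun hl γ hγ => lam0_powDrift_eq_zero hl hγ, fun hl => ?_⟩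
  have hC : 0 < Real.exp (2 * 3 ^ l) * unitBumpRayleigh :=
    mul_pos (Real.exp_pos _) unitBumpRayleigh_pos
  refine ⟨4⁻¹, _, by norm_num, hC, fun γ hγ => ⟨?_, ?_⟩, fun γ hγ hγ1 => ?_⟩
  · refine (ENNReal.ofReal_le_ofReal ?_).trans (le_lam0_powDrift hl (one_pos.trans hγ))
    nlinarith
  · exact lam0_powDrift_le_sq hl hγ
  · obtain ⟨ρ, hρ, hρ1, rfl, hexp⟩ := exists_rpow_eq_of_le_one hl hγ hγ1
    rw [hexp]
    exact ⟨le_lam0_powDrift_rpow hl hρ, lam0_powDrift_rpow_le hl hρ hρ1⟩
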